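/- arXiv:2604.06065 — 2 statements merged into one kernel-verified Lean document; each statement's English description precedes it below -/
import Mathlib

section
/- Let μ be a probability measure on ℝ^d and C_LS > 0. Assume μ satisfies the logarithmic Sobolev inequality: for every C¹ function h : ℝ^d → (0,∞) such that h², h² log h² and ‖∇h‖² are μ-integrable, ∫ h² log( h² / ∫ h² dμ ) dμ ≤ C_LS ∫ ‖∇h‖² dμ. Then for every L-Lipschitz μ-integrable function g : ℝ^d → ℝ and every λ ∈ ℝ, ∫ exp( λ ( g(x) − ∫ g dμ ) ) dμ(x) ≤ exp( (C_LS L² / 4) λ² ). -/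
/-!
Herbst's argument. For a bounded `C¹` function `f` with `‖Df‖ ≤ K`, apply the logarithmic Sobolev
inequality to `h = exp (s f / 2)`: since `‖∇h‖² ≤ s² K² h² / 4`, it bounds the entropy of
`exp (s f)` and becomes the differential inequality `s Λ'(s) - Λ(s) ≤ C K² s² / 4` for the
cumulant generating function `Λ` of `f`. Equivalently `Λ(s) / s - C K² s / 4` is nonincreasing on
`s > 0`, and its limit at `0⁺` is `Λ'(0) = ∫ f dμ`, which gives `Λ(t) ≤ t ∫ f dμ + C K² t² / 4`.
A general `K`-Lipschitz `g` is the pointwise limit of such functions (clip, then mollify), and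
Fatou's lemma transfers the bound to `g`.
-/

open MeasureTheory Set Filter Real Topology ProbabilityTheory
open scoped ENNReal NNReal Convolution

theorem le_mul_add_mul_sq_of_mul_deriv_sub_le {G G' : ℝ → ℝ} {m a t : ℝ} (ht : 0 < t)
    (hG : ∀ s, HasDerivAt G (G' s) s) (hG0 : G 0 = 0) (hG'0 : G' 0 = m)
    (hineq : ∀ s ∈ Ioc 0 t, s * G' s - G s ≤ a * s ^ 2) :
    G t ≤ m * t + a * t ^ 2 := by
  set φ : ℝ → ℝ := fun s => G s / s - a * s
  have hφ : ∀ s ≠ 0, HasDerivAt φ ((G' s * s - G s * 1) / s ^ 2 - a) s := fun s hs =>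
    ((hG s).div (hasDerivAt_id s) hs).sub ((hasDerivAt_id s).const_mul a |>.congr_deriv (mul_one a))
  have hanti : AntitoneOn φ (Ioc 0 t) := by
    refine antitoneOn_of_hasDerivWithinAt_nonpos (convex_Ioc 0 t)
      (fun s hs => (hφ s hs.1.ne').continuousAt.continuousWithinAt)
      (fun s hs => (hφ s (interior_subset hs).1.ne').hasDerivWithinAt) fun s hs => ?_
    obtain ⟨hs0, hst⟩ := interior_subset hs
    rw [sub_nonpos, div_le_iff₀ (by positivity)]
    linarith [hineq s ⟨hs0, hst⟩]
  have hlim : Tendsto φ (𝓝[>] 0) (𝓝 (m - a * 0)) := by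
    refine Tendsto.sub ?_ ((continuous_const_mul a).tendsto 0 |>.mono_left nhdsWithin_le_nhds)
    have := (hG 0).tendsto_slope_zero_right
    simp only [zero_add, hG0, sub_zero, smul_eq_mul, hG'0] at this
    exact this.congr fun s => inv_mul_eq_div _ _
  have hφt : φ t ≤ m := by
    refine ge_of_tendsto (by simpa using hlim) ?_
    filter_upwards [Ioc_mem_nhdsGT ht] with s hs
    exact hanti hs (right_mem_Ioc.mpr ht) hs.2
  have := (div_le_iff₀ ht).mp (sub_le_iff_le_add.mp hφt)
  nlinarith

lemma ProbabilityTheory.integrableExpSet_eq_univ_of_abs_le {Ω : Type*} [MeasurableSpace Ω]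
    {μ : Measure Ω} [IsFiniteMeasure μ] {X : Ω → ℝ} {M : ℝ} (hX : AEMeasurable X μ)
    (hXM : ∀ ω, |X ω| ≤ M) : integrableExpSet X μ = univ :=
  eq_univ_of_forall fun _ =>
    integrable_exp_mul_of_mem_Icc hX (ae_of_all _ fun ω => abs_le.mp (hXM ω))

section LogSobolev

variable {E : Type*} [NormedAddCommGroup E] [InnerProductSpace ℝ E] [CompleteSpace E]

lemma norm_gradient_exp_comp {u : E → ℝ} {x : E} (hu : DifferentiableAt ℝ u x) :
    ‖gradient (fun y => exp (u y)) x‖ = exp (u x) * ‖fderiv ℝ u x‖ := by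
  rw [gradient, LinearIsometryEquiv.norm_map, fderiv_exp hu, norm_smul,
    Real.norm_of_nonneg (exp_pos _).le]

lemma sq_norm_gradient_exp_mul_le {f : E → ℝ} {K : ℝ≥0} (hf : Differentiable ℝ f)
    (hfK : LipschitzWith K f) (s : ℝ) (x : E) :
    ‖gradient (fun y => exp (s / 2 * f y)) x‖ ^ 2 ≤ K ^ 2 / 4 * s ^ 2 * exp (s * f x) := by
  rw [norm_gradient_exp_comp ((hf x).const_mul _), fderiv_const_mul (hf x), norm_smul, mul_pow,
    mul_pow, ← exp_nat_mul, Real.norm_eq_abs, sq_abs]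
  have := pow_le_pow_left₀ (norm_nonneg _) (norm_fderiv_le_of_lipschitz ℝ hfK (x₀ := x)) 2
  calc exp (2 * (s / 2 * f x)) * ((s / 2) ^ 2 * ‖fderiv ℝ f x‖ ^ 2)
      ≤ exp (2 * (s / 2 * f x)) * ((s / 2) ^ 2 * K ^ 2) := by gcongr
    _ = _ := by ring_nf

variable [MeasurableSpace E]

def LogSobolevInequality (μ : Measure E) (C : ℝ) : Prop :=
  ∀ h : E → ℝ, ContDiff ℝ 1 h → (∀ x, 0 < h x) →
    Integrable (fun x => h x ^ 2) μ →
    Integrable (fun x => h x ^ 2 * log (h x ^ 2)) μ →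
    Integrable (fun x => ‖gradient h x‖ ^ 2) μ →
    ∫ x, h x ^ 2 * log (h x ^ 2 / ∫ y, h y ^ 2 ∂μ) ∂μ ≤ C * ∫ x, ‖gradient h x‖ ^ 2 ∂μ

variable [OpensMeasurableSpace E] {μ : Measure E} [IsProbabilityMeasure μ] {C : ℝ}
  {f : E → ℝ} {M : ℝ} {K : ℝ≥0}

namespace LogSobolevInequality

theorem entropy_exp_mul_le (hLSI : LogSobolevInequality μ C) (hC : 0 ≤ C)
    (hf : ContDiff ℝ 1 f) (hfM : ∀ x, |f x| ≤ M) (hfK : LipschitzWith K f) (s : ℝ) :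
    s * ∫ x, f x * exp (s * f x) ∂μ - mgf f μ s * cgf f μ s
      ≤ C * (K ^ 2 / 4 * s ^ 2 * mgf f μ s) := by
  have hexpSet := integrableExpSet_eq_univ_of_abs_le (μ := μ) hf.continuous.aemeasurable hfM
  have hint : Integrable (fun x => exp (s * f x)) μ := (hexpSet ▸ mem_univ s :)
  have hintf : Integrable (fun x => f x * exp (s * f x)) μ := by
    simpa using integrable_pow_mul_exp_of_mem_interior_integrableExpSet (by simp [hexpSet]) 1
  set h : E → ℝ := fun x => exp (s / 2 * f x)
  have hsq : ∀ x, h x ^ 2 = exp (s * f x) := fun x => by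
    rw [← exp_nat_mul]; ring_nf
  have hgrad : ∀ x, ‖gradient h x‖ ^ 2 ≤ K ^ 2 / 4 * s ^ 2 * exp (s * f x) :=
    sq_norm_gradient_exp_mul_le (hf.differentiable one_ne_zero) hfK s
  have hgrad_cont : Continuous fun x => ‖gradient h x‖ ^ 2 :=
    (((InnerProductSpace.toDual ℝ E).symm.continuous.comp
      ((contDiff_exp.comp (contDiff_const.mul hf)).continuous_fderiv one_ne_zero)).norm).pow 2
  have hint_grad : Integrable (fun x => ‖gradient h x‖ ^ 2) μ :=
    (hint.const_mul _).mono' hgrad_cont.aestronglyMeasurable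
      (ae_of_all _ fun x => by simpa using hgrad x)
  have hentropy : ∫ x, h x ^ 2 * log (h x ^ 2 / ∫ y, h y ^ 2 ∂μ) ∂μ
      = s * ∫ x, f x * exp (s * f x) ∂μ - mgf f μ s * cgf f μ s := by
    have hmgf : ∫ y, h y ^ 2 ∂μ = mgf f μ s := by simp only [hsq]; rfl
    have hpt : ∀ x, h x ^ 2 * log (h x ^ 2 / mgf f μ s)
        = s * (f x * exp (s * f x)) - cgf f μ s * exp (s * f x) := fun x => by
      rw [hsq, log_div (exp_pos _).ne' (mgf_pos hint).ne', log_exp, cgf]; ring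
    rw [hmgf, integral_congr_ae (ae_of_all _ hpt), integral_sub (hintf.const_mul s)
      (hint.const_mul _), integral_const_mul, integral_const_mul, mgf]
    ring
  have hLSIh := hLSI h (contDiff_exp.comp (contDiff_const.mul hf)) (fun x => exp_pos _)
    (by simpa only [hsq] using hint)
    (by simpa only [hsq, log_exp, mul_comm, mul_assoc] using hintf.const_mul s) hint_grad
  rw [hentropy] at hLSIh
  refine hLSIh.trans (mul_le_mul_of_nonneg_left ?_ hC)
  rw [mgf, ← integral_const_mul]
  exact integral_mono hint_grad (hint.const_mul _) hgrad

theorem cgf_le_of_nonneg (hLSI : LogSobolevInequality μ C) (hC : 0 ≤ C)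
    (hf : ContDiff ℝ 1 f) (hfM : ∀ x, |f x| ≤ M) (hfK : LipschitzWith K f) {t : ℝ} (ht : 0 ≤ t) :
    cgf f μ t ≤ (∫ x, f x ∂μ) * t + C * K ^ 2 / 4 * t ^ 2 := by
  rcases ht.eq_or_lt with rfl | ht
  · simp
  have hexpSet := integrableExpSet_eq_univ_of_abs_le (μ := μ) hf.continuous.aemeasurable hfM
  have hint : ∀ s, Integrable (fun x => exp (s * f x)) μ := fun s => (hexpSet ▸ mem_univ s :)
  refine le_mul_add_mul_sq_of_mul_deriv_sub_le ht
    (G' := fun s => (∫ x, f x * exp (s * f x) ∂μ) / mgf f μ s) (fun s => ?_) cgf_zero (by simp)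
    fun s _ => ?_
  · rw [← deriv_cgf (by simp [hexpSet])]
    exact (analyticAt_cgf (by simp [hexpSet])).differentiableAt.hasDerivAt
  · have hmgf := mgf_pos (hint s) (μ := μ)
    have := hLSI.entropy_exp_mul_le hC hf hfM hfK s
    rw [mul_div_assoc', div_sub' hmgf.ne', div_le_iff₀ hmgf]
    linarith

theorem cgf_le (hLSI : LogSobolevInequality μ C) (hC : 0 ≤ C)
    (hf : ContDiff ℝ 1 f) (hfM : ∀ x, |f x| ≤ M) (hfK : LipschitzWith K f) (t : ℝ) :
    cgf f μ t ≤ (∫ x, f x ∂μ) * t + C * K ^ 2 / 4 * t ^ 2 := by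
  rcases le_total 0 t with ht | ht
  · exact hLSI.cgf_le_of_nonneg hC hf hfM hfK ht
  have := hLSI.cgf_le_of_nonneg hC hf.neg (fun x => (abs_neg (f x)).trans_le (hfM x)) hfK.neg
    (neg_nonneg.mpr ht)
  rw [integral_neg, ← Pi.neg_def, cgf_neg, neg_neg] at this
  linarith

theorem lintegral_exp_mul_sub_integral_le (hLSI : LogSobolevInequality μ C) (hC : 0 ≤ C)
    (hf : ContDiff ℝ 1 f) (hfM : ∀ x, |f x| ≤ M) (hfK : LipschitzWith K f) (t : ℝ) :
    ∫⁻ x, ENNReal.ofReal (exp (t * (f x - ∫ y, f y ∂μ))) ∂μ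
      ≤ ENNReal.ofReal (exp (C * K ^ 2 / 4 * t ^ 2)) := by
  have hint : Integrable (fun x => exp (t * f x)) μ := by
    have := integrableExpSet_eq_univ_of_abs_le (μ := μ) hf.continuous.aemeasurable hfM
    exact (this ▸ mem_univ t :)
  have hsplit : (fun x => exp (t * (f x - ∫ y, f y ∂μ)))
      = fun x => exp (-(t * ∫ y, f y ∂μ)) * exp (t * f x) := by
    ext x; rw [← exp_add]; ring_nf
  have hint' : Integrable (fun x => exp (t * (f x - ∫ y, f y ∂μ))) μ := by
    rw [hsplit]; exact hint.const_mul _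
  rw [← ofReal_integral_eq_lintegral_ofReal hint' (ae_of_all _ fun x => by positivity), hsplit,
    integral_const_mul, ← mgf, ← exp_cgf hint, ← exp_add]
  gcongr
  linarith [hLSI.cgf_le hC hf hfM hfK t]

end LogSobolevInequality

end LogSobolev

section Approximation

variable {E : Type*} [NormedAddCommGroup E] [NormedSpace ℝ E] [FiniteDimensional ℝ E]
  {K : ℝ≥0} {g : E → ℝ}

theorem LipschitzWith.exists_contDiff_lipschitzWith_abs_sub_le (hg : LipschitzWith K g)
    {ε : ℝ} (hε : 0 < ε) :
    ∃ f : E → ℝ, ContDiff ℝ 1 f ∧ LipschitzWith K f ∧ ∀ x, |f x - g x| ≤ K * ε := by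
  borelize E
  set μ : Measure E := .addHaar
  set φ : ContDiffBump (0 : E) := ⟨ε / 2, ε, half_pos hε, half_lt_self hε⟩
  have hconv : ConvolutionExists (φ.normed μ) g (ContinuousLinearMap.lsmul ℝ ℝ) μ :=
    φ.hasCompactSupport_normed.convolutionExists_left_of_continuous_right _
      φ.integrable_normed.locallyIntegrable hg.continuous
  refine ⟨φ.normed μ ⋆[ContinuousLinearMap.lsmul ℝ ℝ, μ] g,
    φ.hasCompactSupport_normed.contDiff_convolution_left _ φ.contDiff_normed
      hg.continuous.locallyIntegrable,
    LipschitzWith.of_dist_le_mul fun x y => ?_, fun x => ?_⟩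
  · rw [dist_eq_norm, convolution_def, convolution_def,
      ← integral_sub (hconv x).integrable (hconv y).integrable]
    refine (norm_integral_le_of_norm_le (φ.integrable_normed.mul_const (K * dist x y))
      (ae_of_all _ fun t => ?_)).trans_eq (by rw [integral_mul_const, φ.integral_normed, one_mul])
    simp only [ContinuousLinearMap.lsmul_apply, smul_eq_mul, ← mul_sub, norm_mul,
      Real.norm_of_nonneg (φ.nonneg_normed t), ← dist_eq_norm]
    gcongr
    · exact φ.nonneg_normed t
    · simpa only [dist_sub_right] using hg.dist_le_mul (x - t) (y - t)
  · rw [← Real.dist_eq]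
    refine φ.dist_normed_convolution_le hg.continuous.aestronglyMeasurable fun y hy => ?_
    exact (hg.dist_le_mul y x).trans (by gcongr; exact (Metric.mem_ball.mp hy).le)

theorem LipschitzWith.exists_seq_contDiff_tendsto (hg : LipschitzWith K g) :
    ∃ f : ℕ → E → ℝ, (∀ n, ContDiff ℝ 1 (f n)) ∧ (∀ n, LipschitzWith K (f n)) ∧
      (∀ n, ∃ M, ∀ x, |f n x| ≤ M) ∧ (∀ n x, |f n x| ≤ |g x| + K) ∧
      ∀ x, Tendsto (fun n => f n x) atTop (𝓝 (g x)) := by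
  set clip : ℕ → ℝ → ℝ := fun n y => max (-n) (min n y)
  have hclip_abs : ∀ (n : ℕ) (y : ℝ), |clip n y| ≤ |y| := fun n y => by
    grind [abs_le]
  have hclip_le : ∀ (n : ℕ) (y : ℝ), |clip n y| ≤ n := fun n y => by
    grind [abs_le]
  have hclip_eq : ∀ (n : ℕ) (y : ℝ), |y| ≤ n → clip n y = y := fun n y => by
    grind [abs_le]
  choose f hfC hfK hfg using fun n : ℕ =>
    ((hg.const_min n).const_max (-n)).exists_contDiff_lipschitzWith_abs_sub_le
      (Nat.one_div_pos_of_nat (n := n))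
  have hclose : ∀ n x, |f n x - clip n (g x)| ≤ K := fun n x =>
    (hfg n x).trans (mul_le_of_le_one_right K.2
      (div_le_one_of_le₀ (le_add_of_nonneg_left n.cast_nonneg) (by positivity)))
  refine ⟨f, hfC, hfK, fun n => ⟨n + K, fun x => ?_⟩, fun n x => ?_, fun x => ?_⟩
  · linarith [abs_sub_abs_le_abs_sub (f n x) (clip n (g x)), hclose n x, hclip_le n (g x)]
  · linarith [abs_sub_abs_le_abs_sub (f n x) (clip n (g x)), hclose n x, hclip_abs n (g x)]
  have hclip_lim : Tendsto (fun n => clip n (g x)) atTop (𝓝 (g x)) :=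
    tendsto_const_nhds.congr' <| (eventually_ge_atTop ⌈|g x|⌉₊).mono fun n hn =>
      (hclip_eq n _ ((Nat.le_ceil _).trans (Nat.cast_le.mpr hn))).symm
  have hdiff_lim : Tendsto (fun n => f n x - clip n (g x)) atTop (𝓝 0) :=
    squeeze_zero_norm (fun n => hfg n x) <| by
      simpa using tendsto_one_div_add_atTop_nhds_zero_nat.const_mul (K : ℝ)
  simpa using hdiff_lim.add hclip_lim

end Approximation

theorem MeasureTheory.lintegral_le_of_tendsto_of_lintegral_le {α : Type*} [MeasurableSpace α]
    {μ : Measure α} {F : ℕ → α → ℝ≥0∞} {G : α → ℝ≥0∞} {B : ℝ≥0∞}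
    (hF : ∀ n, AEMeasurable (F n) μ) (hFG : ∀ x, Tendsto (fun n => F n x) atTop (𝓝 (G x)))
    (hB : ∀ n, ∫⁻ x, F n x ∂μ ≤ B) :
    ∫⁻ x, G x ∂μ ≤ B :=
  calc ∫⁻ x, G x ∂μ = ∫⁻ x, liminf (fun n => F n x) atTop ∂μ :=
        lintegral_congr fun x => (hFG x).liminf_eq.symm
    _ ≤ liminf (fun n => ∫⁻ x, F n x ∂μ) atTop := lintegral_liminf_le' hF
    _ ≤ liminf (fun _ => B) atTop := liminf_le_liminf (.of_forall hB)
    _ = B := liminf_const B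

/-- Herbst argument: a logarithmic Sobolev inequality implies a sub-Gaussian bound on
the moment generating function of any Lipschitz observable. -/
theorem stmt9 {d : ℕ} (μ : Measure (EuclideanSpace ℝ (Fin d))) [IsProbabilityMeasure μ]
    (CLS : ℝ) (hCLS : 0 < CLS)
    (hLSI : ∀ h : EuclideanSpace ℝ (Fin d) → ℝ,
      ContDiff ℝ 1 h → (∀ x, 0 < h x) →
      Integrable (fun x => h x ^ 2) μ →
      Integrable (fun x => h x ^ 2 * Real.log (h x ^ 2)) μ →
      Integrable (fun x => ‖gradient h x‖ ^ 2) μ →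
      ∫ x, h x ^ 2 * Real.log (h x ^ 2 / ∫ y, h y ^ 2 ∂μ) ∂μ
        ≤ CLS * ∫ x, ‖gradient h x‖ ^ 2 ∂μ)
    (L : ℝ) (g : EuclideanSpace ℝ (Fin d) → ℝ)
    (hg : ∀ x y, |g x - g y| ≤ L * ‖x - y‖)
    (hgint : Integrable g μ)
    (lam : ℝ) :
    ∫⁻ x, ENNReal.ofReal (Real.exp (lam * (g x - ∫ y, g y ∂μ))) ∂μ
      ≤ ENNReal.ofReal (Real.exp (CLS * L ^ 2 / 4 * lam ^ 2)) := by
  have hgK : LipschitzWith ‖L‖₊ g := LipschitzWith.of_dist_le_mul fun x y => by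
    rw [Real.dist_eq, dist_eq_norm, coe_nnnorm, Real.norm_eq_abs]
    exact (hg x y).trans (by gcongr; exact le_abs_self L)
  obtain ⟨f, hfC, hfK, hfM, hfg, hfg_lim⟩ := hgK.exists_seq_contDiff_tendsto
  have hmean : Tendsto (fun n => ∫ x, f n x ∂μ) atTop (𝓝 (∫ x, g x ∂μ)) :=
    tendsto_integral_of_dominated_convergence _ (fun n => (hfC n).continuous.aestronglyMeasurable)
      (hgint.abs.add (integrable_const _)) (fun n => ae_of_all _ (hfg n)) (ae_of_all _ hfg_lim)
  refine lintegral_le_of_tendsto_of_lintegral_le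
    (F := fun n x => ENNReal.ofReal (exp (lam * (f n x - ∫ y, f n y ∂μ))))
    (fun n => ?_) (fun x => ?_) fun n => ?_
  · have := (hfC n).continuous
    exact (by fun_prop : Continuous _).measurable.ennreal_ofReal.aemeasurable
  · exact ((ENNReal.continuous_ofReal.comp continuous_exp).tendsto _).comp
      (((hfg_lim x).sub hmean).const_mul lam)
  · obtain ⟨M, hM⟩ := hfM n
    simpa only [coe_nnnorm, Real.norm_eq_abs, sq_abs] using
      LogSobolevInequality.lintegral_exp_mul_sub_integral_le hLSI hCLS.le (hfC n) hM (hfK n) lam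
end

section
/- Let α, K, A > 0 and β ∈ (0,1]. There exists a constant C > 0 depending only on (α, β, K, A) and not on the dimension d such that the following holds: for every d ≥ 1 and every probability density p* on ℝ^d of the form p*(x) = Z^{−1} exp( −u(x) + a(x) ), where u : ℝ^d → ℝ is C² with ⟨h, ∇²u(x) h⟩ ≥ α‖h‖² for all x, h, a is β-Hölder with constant K, Z is the normalizing constant, and the minimizer y₀ of u (i.e. ∇u(y₀) = 0) satisfies ‖y₀‖ ≤ A√d, one has ∫_{ℝ^d} ‖x‖² p*(x) dx ≤ C d. -/
open MeasureTheory Set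
open scoped ENNReal

/-! Write `φ = -u + a` and contract towards the critical point, `T x = y₀ + (1 - 1/(2d)) • (x - y₀)`.
Strong convexity of `u` about `y₀` makes `φ (T x) - φ x` at least `α ‖x - y₀‖² / (8d)`, up to the
additive cost `K + 2K²/α` of the Hölder perturbation `a`. Since `t² e^{-α t²/(8d)} ≤ 8d/α` and
`‖y₀‖² ≤ A² d`, this gives `‖x‖² e^{φ x} ≤ C d e^{φ (T x)}` pointwise. Integrating, the Jacobian
factor of the change of variables is `(1 - 1/(2d))^{-d} ≤ 2` by Bernoulli's inequality, so the
second moment of `e^φ` is at most `2 C d` times its mass. -/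

theorem half_mul_sq_sub_sq_le_sub_of_hasDerivAt {g g' g'' : ℝ → ℝ} {c : ℝ}
    (hg : ∀ s, HasDerivAt g (g' s) s) (hg' : ∀ s, HasDerivAt g' (g'' s) s)
    (hc : ∀ s, c ≤ g'' s) (h0 : g' 0 = 0) {a b : ℝ} (ha : 0 ≤ a) (hab : a ≤ b) :
    c / 2 * (b ^ 2 - a ^ 2) ≤ g b - g a := by
  have hg'_ge : ∀ s, 0 ≤ s → c * s ≤ g' s := by
    have hmono : Monotone fun s => g' s - c * s :=
      monotone_of_hasDerivAt_nonneg (fun s => (hg' s).sub ((hasDerivAt_id s).const_mul c))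
        fun s => by simpa using hc s
    intro s hs
    simpa [h0] using hmono hs
  have hmono : MonotoneOn (fun s => g s - c / 2 * s ^ 2) (Ici 0) := by
    have hderiv : ∀ s, HasDerivAt (fun s => g s - c / 2 * s ^ 2) (g' s - c * s) s := fun s =>
      ((hg s).sub ((hasDerivAt_pow 2 s).const_mul (c / 2))).congr_deriv (by push_cast; ring)
    refine monotoneOn_of_hasDerivWithinAt_nonneg (convex_Ici 0)
      (fun s _ => (hderiv s).continuousAt.continuousWithinAt)
      (fun s _ => (hderiv s).hasDerivWithinAt) fun s hs => ?_
    rw [interior_Ici] at hs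
    linarith [hg'_ge s hs.le]
  have := hmono ha (ha.trans hab) hab
  simp only at this
  linarith

section Contraction

variable {E : Type*} [NormedAddCommGroup E] [NormedSpace ℝ E]

theorem add_mul_sq_norm_le_of_hessian_ge {u : E → ℝ} {α : ℝ} (hu : ContDiff ℝ 2 u)
    (hess : ∀ y h, α * ‖h‖ ^ 2 ≤ iteratedFDeriv ℝ 2 u y ![h, h]) {y₀ : E}
    (hcrit : fderiv ℝ u y₀ = 0) (x : E) {l : ℝ} (hl0 : 0 ≤ l) (hl1 : l ≤ 1) :
    u (y₀ + l • (x - y₀)) + α / 2 * (1 - l ^ 2) * ‖x - y₀‖ ^ 2 ≤ u x := by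
  set v := x - y₀
  have hline : ∀ s : ℝ, HasDerivAt (fun s : ℝ => y₀ + s • v) v s := fun s => by
    simpa using ((hasDerivAt_id s).smul_const v).const_add y₀
  have hdiff : Differentiable ℝ u := hu.differentiable (by norm_num)
  have hdiff' : Differentiable ℝ (fderiv ℝ u) :=
    (hu.fderiv_right (m := 1) (by norm_num)).differentiable one_ne_zero
  have key := half_mul_sq_sub_sq_le_sub_of_hasDerivAt (c := α * ‖v‖ ^ 2) (a := l) (b := 1)
    (g := fun s => u (y₀ + s • v)) (g' := fun s => fderiv ℝ u (y₀ + s • v) v)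
    (g'' := fun s => iteratedFDeriv ℝ 2 u (y₀ + s • v) ![v, v])
    (fun s => (hdiff _).hasFDerivAt.comp_hasDerivAt s (hline s))
    (fun s => by
      rw [iteratedFDeriv_two_apply]
      exact ((ContinuousLinearMap.apply ℝ ℝ v).hasFDerivAt.comp _
        (hdiff' _).hasFDerivAt).comp_hasDerivAt s (hline s))
    (fun s => hess _ v) (by simp [hcrit]) hl0 hl1
  have hx : y₀ + (1 : ℝ) • v = x := by simp [v]
  rw [hx] at key
  linarith

theorem rpow_le_one_add {β s : ℝ} (hβ0 : 0 < β) (hβ1 : β ≤ 1) (hs : 0 ≤ s) : s ^ β ≤ 1 + s := by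
  rcases le_or_gt s 1 with h | h
  · linarith [Real.rpow_le_one hs h hβ0.le]
  · linarith [Real.rpow_le_self_of_one_le h.le hβ1]

theorem mul_le_mul_sq_add {α : ℝ} (hα : 0 < α) (K t : ℝ) :
    K * t ≤ α / 8 * t ^ 2 + 2 * K ^ 2 / α := by
  have hsq : α / 8 * t ^ 2 + 2 * K ^ 2 / α - K * t = (α * t - 4 * K) ^ 2 / (8 * α) := by
    field_simp
    ring
  linarith [hsq ▸ (by positivity : 0 ≤ (α * t - 4 * K) ^ 2 / (8 * α))]

theorem sq_mul_exp_neg_mul_sq_le {γ : ℝ} (hγ : 0 < γ) (t : ℝ) :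
    t ^ 2 * Real.exp (-(γ * t ^ 2)) ≤ γ⁻¹ := by
  have h := (Real.mul_exp_neg_le_exp_neg_one (γ * t ^ 2)).trans
    (Real.exp_le_one_iff.mpr (by norm_num))
  calc t ^ 2 * Real.exp (-(γ * t ^ 2)) = γ⁻¹ * (γ * t ^ 2 * Real.exp (-(γ * t ^ 2))) := by
        field_simp
    _ ≤ γ⁻¹ := mul_le_of_le_one_right (by positivity) h

theorem neg_add_le_comp_contraction {u a : E → ℝ} {α β K : ℝ} (hα : 0 < α) (hβ0 : 0 < β)
    (hβ1 : β ≤ 1) (hK : 0 ≤ K) {y₀ : E}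
    (hu : ∀ x {l : ℝ}, 0 ≤ l → l ≤ 1 →
      u (y₀ + l • (x - y₀)) + α / 2 * (1 - l ^ 2) * ‖x - y₀‖ ^ 2 ≤ u x)
    (ha : ∀ x y, |a x - a y| ≤ K * ‖x - y‖ ^ β) {ε : ℝ} (hε0 : 0 ≤ ε) (hε1 : ε ≤ 1) (x : E) :
    -u x + a x + α / 4 * ε * ‖x - y₀‖ ^ 2 ≤
      -u (y₀ + (1 - ε) • (x - y₀)) + a (y₀ + (1 - ε) • (x - y₀)) + (K + 2 * K ^ 2 / α) := by
  set t := ‖x - y₀‖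
  set y := y₀ + (1 - ε) • (x - y₀)
  have hxy : ‖x - y‖ = ε * t := by
    rw [show x - y = ε • (x - y₀) by simp only [y, sub_smul, one_smul]; abel, norm_smul,
      Real.norm_of_nonneg hε0]
  have hconv : u y + α / 2 * (1 - (1 - ε) ^ 2) * t ^ 2 ≤ u x :=
    hu x (sub_nonneg.mpr hε1) (by linarith)
  have hhol : a x - a y ≤ K * (1 + ε * t) := by
    calc a x - a y ≤ K * ‖x - y‖ ^ β := (abs_le.mp (ha x y)).2
      _ ≤ K * (1 + ε * t) := by
        rw [hxy]
        exact mul_le_mul_of_nonneg_left (rpow_le_one_add hβ0 hβ1 (by positivity)) hK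
  have hyoung := mul_le_mul_sq_add hα K t
  have hεK : ε * (2 * K ^ 2 / α) ≤ 2 * K ^ 2 / α :=
    mul_le_of_le_one_left (by positivity) hε1
  have hgain : 0 ≤ α * (ε * (1 - ε)) * t ^ 2 :=
    mul_nonneg (mul_nonneg hα.le (mul_nonneg hε0 (sub_nonneg.mpr hε1))) (sq_nonneg t)
  nlinarith [mul_le_mul_of_nonneg_left hyoung hε0, mul_nonneg (mul_nonneg hα.le hε0) (sq_nonneg t)]

theorem sq_norm_mul_exp_le_comp_contraction {u a : E → ℝ} {α β K A n : ℝ} (hα : 0 < α)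
    (hβ0 : 0 < β) (hβ1 : β ≤ 1) (hK : 0 ≤ K) (hn : 1 ≤ n) {y₀ : E}
    (hu : ∀ x {l : ℝ}, 0 ≤ l → l ≤ 1 →
      u (y₀ + l • (x - y₀)) + α / 2 * (1 - l ^ 2) * ‖x - y₀‖ ^ 2 ≤ u x)
    (ha : ∀ x y, |a x - a y| ≤ K * ‖x - y‖ ^ β) (hy₀ : ‖y₀‖ ≤ A * Real.sqrt n) (x : E) :
    ‖x‖ ^ 2 * Real.exp (-u x + a x) ≤
      (16 / α + 2 * A ^ 2) * Real.exp (K + 2 * K ^ 2 / α) * n *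
        Real.exp (-u (y₀ + (1 - 1 / (2 * n)) • (x - y₀)) +
          a (y₀ + (1 - 1 / (2 * n)) • (x - y₀))) := by
  set t := ‖x - y₀‖
  set φy := -u (y₀ + (1 - 1 / (2 * n)) • (x - y₀)) + a (y₀ + (1 - 1 / (2 * n)) • (x - y₀))
  have hn0 : 0 < n := by linarith
  have hexponent : -u x + a x ≤ φy + (K + 2 * K ^ 2 / α) - α / (8 * n) * t ^ 2 := by
    have := neg_add_le_comp_contraction hα hβ0 hβ1 hK hu ha (ε := 1 / (2 * n)) (by positivity)
      (by rw [div_le_one (by positivity)]; linarith) x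
    have hγ : α / (8 * n) = α / 4 * (1 / (2 * n)) := by field_simp; ring
    rw [hγ]
    linarith
  have hnorm : ‖x‖ ^ 2 ≤ 2 * t ^ 2 + 2 * A ^ 2 * n := by
    have hsum : ‖x‖ ≤ t + ‖y₀‖ := by simpa using norm_add_le (x - y₀) y₀
    have hy₀sq : ‖y₀‖ ^ 2 ≤ A ^ 2 * n := by
      calc ‖y₀‖ ^ 2 ≤ (A * Real.sqrt n) ^ 2 := pow_le_pow_left₀ (norm_nonneg _) hy₀ 2
        _ = A ^ 2 * n := by rw [mul_pow, Real.sq_sqrt hn0.le]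
    nlinarith [norm_nonneg x, norm_nonneg y₀, sq_nonneg (t - ‖y₀‖)]
  have hgauss : t ^ 2 * Real.exp (-(α / (8 * n) * t ^ 2)) ≤ 8 * n / α := by
    simpa using sq_mul_exp_neg_mul_sq_le (γ := α / (8 * n)) (by positivity) t
  have hdecay : Real.exp (-(α / (8 * n) * t ^ 2)) ≤ 1 :=
    Real.exp_le_one_iff.mpr (by simp only [neg_nonpos]; positivity)
  calc ‖x‖ ^ 2 * Real.exp (-u x + a x)
      ≤ (2 * t ^ 2 + 2 * A ^ 2 * n) *
          Real.exp (φy + (K + 2 * K ^ 2 / α) - α / (8 * n) * t ^ 2) := by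
        gcongr
    _ = (2 * (t ^ 2 * Real.exp (-(α / (8 * n) * t ^ 2))) +
          2 * A ^ 2 * n * Real.exp (-(α / (8 * n) * t ^ 2))) *
          Real.exp (K + 2 * K ^ 2 / α) * Real.exp φy := by
        rw [sub_eq_add_neg, Real.exp_add, Real.exp_add]; ring
    _ ≤ (2 * (8 * n / α) + 2 * A ^ 2 * n * 1) * Real.exp (K + 2 * K ^ 2 / α) * Real.exp φy := by
        gcongr
    _ = _ := by field_simp; ring

end Contraction

section Homothety

variable {E : Type*} [NormedAddCommGroup E] [NormedSpace ℝ E] [FiniteDimensional ℝ E]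
  [MeasurableSpace E] [BorelSpace E] (μ : Measure E) [μ.IsAddHaarMeasure]

theorem lintegral_comp_homothety (f : E → ℝ≥0∞) (c : E) {r : ℝ} (hr : r ≠ 0) :
    ∫⁻ x, f (c + r • (x - c)) ∂μ =
      ENNReal.ofReal |(r ^ Module.finrank ℝ E)⁻¹| * ∫⁻ x, f x ∂μ := by
  calc ∫⁻ x, f (c + r • (x - c)) ∂μ = ∫⁻ x, f (c + r • x) ∂μ :=
        lintegral_sub_right_eq_self (fun x => f (c + r • x)) c
    _ = ∫⁻ x, f (c + x) ∂(Measure.map (r • ·) μ) :=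
        (lintegral_map_equiv (fun x => f (c + x)) (MeasurableEquiv.smul₀ r hr)).symm
    _ = _ := by
        rw [Measure.map_addHaar_smul μ hr, lintegral_smul_measure, smul_eq_mul,
          lintegral_add_left_eq_self]

theorem lintegral_ofReal_le_of_le_comp_homothety {f g : E → ℝ} {M r : ℝ} (hM : 0 ≤ M)
    (hr : 0 < r) (c : E) (h : ∀ x, g x ≤ M * f (c + r • (x - c))) :
    ∫⁻ x, ENNReal.ofReal (g x) ∂μ ≤
      ENNReal.ofReal (M * (r ^ Module.finrank ℝ E)⁻¹) * ∫⁻ x, ENNReal.ofReal (f x) ∂μ := by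
  calc ∫⁻ x, ENNReal.ofReal (g x) ∂μ
      ≤ ∫⁻ x, ENNReal.ofReal M * ENNReal.ofReal (f (c + r • (x - c))) ∂μ :=
        lintegral_mono fun x => by
          rw [← ENNReal.ofReal_mul hM]
          exact ENNReal.ofReal_le_ofReal (h x)
    _ = _ := by
        rw [lintegral_const_mul' _ _ ENNReal.ofReal_ne_top,
          lintegral_comp_homothety μ (fun y => ENNReal.ofReal (f y)) c hr.ne',
          abs_of_pos (by positivity), ← mul_assoc, ← ENNReal.ofReal_mul hM]

end Homothety

theorem half_le_one_sub_one_div_two_mul_pow (n : ℕ) : (1 : ℝ) / 2 ≤ (1 - 1 / (2 * n)) ^ n := by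
  rcases n.eq_zero_or_pos with rfl | hn
  · norm_num
  have hn' : (1 : ℝ) ≤ n := by exact_mod_cast hn
  have h := one_add_mul_le_pow (a := -(1 / (2 * (n : ℝ)))) (by
    rw [neg_le_neg_iff, div_le_iff₀ (by positivity)]; nlinarith) n
  calc (1 : ℝ) / 2 = 1 + n * -(1 / (2 * n)) := by field_simp; ring
    _ ≤ _ := h

theorem lintegral_ofReal_div_integral_le {X : Type*} [MeasurableSpace X] {μ : Measure X}
    {f g : X → ℝ} (hf : 0 ≤ f) {B : ℝ}
    (h : ∫⁻ x, ENNReal.ofReal (g x) ∂μ ≤ ENNReal.ofReal B * ∫⁻ x, ENNReal.ofReal (f x) ∂μ) :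
    ∫⁻ x, ENNReal.ofReal (g x / ∫ y, f y ∂μ) ∂μ ≤ ENNReal.ofReal B := by
  rcases (integral_nonneg (μ := μ) hf).eq_or_lt with hZ | hZ
  · simp_rw [← hZ, div_zero, ENNReal.ofReal_zero, lintegral_zero]
    exact zero_le
  rw [← ofReal_integral_eq_lintegral_ofReal (Integrable.of_integral_ne_zero hZ.ne')
    (ae_of_all _ hf)] at h
  simp_rw [ENNReal.ofReal_div_of_pos hZ, div_eq_mul_inv]
  rw [lintegral_mul_const' _ _ (ENNReal.inv_ne_top.mpr (ENNReal.ofReal_pos.mpr hZ).ne')]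
  exact ENNReal.div_le_of_le_mul h

theorem stmt17_general (α β K A : ℝ) (hα : 0 < α) (hβ : β ∈ Set.Ioc (0 : ℝ) 1)
    (hK : 0 < K) :
    ∃ C : ℝ, 0 < C ∧
      ∀ (d : ℕ), 1 ≤ d →
      ∀ (u a pstar : EuclideanSpace ℝ (Fin d) → ℝ) (Z : ℝ)
        (y₀ : EuclideanSpace ℝ (Fin d)),
        ContDiff ℝ 2 u →
        (∀ y h, α * ‖h‖ ^ 2 ≤ iteratedFDeriv ℝ 2 u y ![h, h]) →
        (∀ x y, |a x - a y| ≤ K * ‖x - y‖ ^ β) →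
        gradient u y₀ = 0 →
        ‖y₀‖ ≤ A * Real.sqrt d →
        Z = ∫ y, Real.exp (-u y + a y) →
        (∀ y, pstar y = Real.exp (-u y + a y) / Z) →
        ∫⁻ x, ENNReal.ofReal (‖x‖ ^ 2 * pstar x) ≤ ENNReal.ofReal (C * d) := by
  obtain ⟨hβ0, hβ1⟩ := hβ
  set M := (16 / α + 2 * A ^ 2) * Real.exp (K + 2 * K ^ 2 / α)
  refine ⟨2 * M, by positivity, ?_⟩
  rintro d hd u a pstar Z y₀ hu hess ha hgrad hy₀ rfl hp
  have hd' : (1 : ℝ) ≤ d := by exact_mod_cast hd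
  have hcrit : fderiv ℝ u y₀ = 0 := by simpa [gradient] using hgrad
  have hpoint := sq_norm_mul_exp_le_comp_contraction hα hβ0 hβ1 hK.le hd'
    (fun x _ hl0 hl1 => add_mul_sq_norm_le_of_hessian_ge hu hess hcrit x hl0 hl1) ha hy₀
  have hl0 : 0 < 1 - 1 / (2 * (d : ℝ)) := by
    have : 1 / (2 * (d : ℝ)) ≤ 1 / 2 := by gcongr; linarith
    linarith
  have hmoment := lintegral_ofReal_le_of_le_comp_homothety volume (M := M * d)
    (f := fun y => Real.exp (-u y + a y)) (by positivity) hl0 y₀ hpoint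
  rw [finrank_euclideanSpace_fin] at hmoment
  simp_rw [hp, ← mul_div_assoc]
  refine (lintegral_ofReal_div_integral_le (fun x => (Real.exp_pos _).le) hmoment).trans
    (ENNReal.ofReal_le_ofReal ?_)
  calc M * d * ((1 - 1 / (2 * (d : ℝ))) ^ d)⁻¹ ≤ M * d * 2 := by
        gcongr
        rw [inv_le_comm₀ (by positivity) two_pos]
        simpa using half_le_one_sub_one_div_two_mul_pow d
    _ = 2 * M * d := by ring

/-- Dimension-sharp second-moment bound for weakly log-concave densities whose convex
part is minimized at Gaussian scale `O(√d)`: `∫ ‖x‖² p*(x) dx ≤ C d`. -/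
theorem stmt17 (α β K A : ℝ) (hα : 0 < α) (hβ : β ∈ Set.Ioc (0 : ℝ) 1)
    (hK : 0 < K) (hA : 0 < A) :
    ∃ C : ℝ, 0 < C ∧
      ∀ (d : ℕ), 1 ≤ d →
      ∀ (u a pstar : EuclideanSpace ℝ (Fin d) → ℝ) (Z : ℝ)
        (y₀ : EuclideanSpace ℝ (Fin d)),
        ContDiff ℝ 2 u →
        (∀ y h, α * ‖h‖ ^ 2 ≤ iteratedFDeriv ℝ 2 u y ![h, h]) →
        (∀ x y, |a x - a y| ≤ K * ‖x - y‖ ^ β) →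
        gradient u y₀ = 0 →
        ‖y₀‖ ≤ A * Real.sqrt d →
        Z = ∫ y, Real.exp (-u y + a y) →
        (∀ y, pstar y = Real.exp (-u y + a y) / Z) →
        ∫⁻ x, ENNReal.ofReal (‖x‖ ^ 2 * pstar x) ≤ ENNReal.ofReal (C * d) :=
  stmt17_general α β K A hα hβ hK
end
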